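/- Let G be a finite group with a normal cyclic subgroup A such that G/A is nilpotent, and suppose that the Zassenhaus Conjecture holds for every proper quotient of G. Let u be a torsion element of V(ℤG). If x ∈ G is such that the set of commutators (x,G) = {x⁻¹g⁻¹xg : g ∈ G} contains a nontrivial normal subgroup of G, then ε_x(u) ≥ 0. -/

import Mathlib

open scoped Classical Pointwise

noncomputable section

namespace ZCPaper

variable {G : Type*} [Group G]

/-- The augmentation of an element of the integral group ring `ℤG`. -/
def aug (u : MonoidAlgebra ℤ G) : ℤ := Finsupp.sum u.coeff fun _ a => a

/-- The canonical inclusion `ℤG → ℚG`. -/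
def toQ : MonoidAlgebra ℤ G →+* MonoidAlgebra ℚ G :=
  MonoidAlgebra.liftNCRingHom (MonoidAlgebra.singleOneRingHom.comp (Int.castRingHom ℚ))
    (MonoidAlgebra.of ℚ G) (fun r g => by
      show Commute (MonoidAlgebra.single 1 ((r : ℚ))) (MonoidAlgebra.single g 1)
      unfold Commute SemiconjBy
      rw [MonoidAlgebra.single_mul_single, MonoidAlgebra.single_mul_single,
        one_mul, mul_one, one_mul, mul_one])

/-- `u ∈ ℤG` is rationally conjugate to the group element `g`, i.e. `v⁻¹ u v = g`
for some unit `v` of `ℚG`. -/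
def RatConj (u : MonoidAlgebra ℤ G) (g : G) : Prop :=
  ∃ v : (MonoidAlgebra ℚ G)ˣ,
    (↑v⁻¹ : MonoidAlgebra ℚ G) * toQ u * ↑v = MonoidAlgebra.of ℚ G g

/-- The partial augmentation `ε_g(u)`: the sum of the coefficients of `u`
over the conjugacy class of `g`. -/
def pa (u : MonoidAlgebra ℤ G) (g : G) : ℤ :=
  Finsupp.sum u.coeff fun x a => if IsConj g x then a else 0

/-- The Zassenhaus Conjecture holds for `H`: every torsion unit of `ℤH` of
augmentation `1` is rationally conjugate to a group element. -/
def ZC (H : Type*) [Group H] : Prop :=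
  ∀ u : (MonoidAlgebra ℤ H)ˣ, IsOfFinOrder u → aug (u : MonoidAlgebra ℤ H) = 1 →
    ∃ h : H, RatConj (u : MonoidAlgebra ℤ H) h

/-- The Zassenhaus Conjecture holds for every proper quotient of `H`. -/
def ZCProperQuotients (H : Type*) [Group H] : Prop :=
  ∀ (M : Subgroup H) [M.Normal], M ≠ ⊥ → ZC (H ⧸ M)

/-- `ω_D(u) = 1`: the sum of the coefficients of `u` over each coset `gD`
is `1` for the trivial coset and `0` otherwise.  (For `D` normal this says
exactly that the image of `u` in `ℤ(G/D)` is `1`.) -/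
def mapsToOne (D : Subgroup G) (u : MonoidAlgebra ℤ G) : Prop :=
  ∀ g : G, (Finsupp.sum u.coeff fun x a => if g⁻¹ * x ∈ D then a else 0) =
    if g ∈ D then 1 else 0

/-- A group is Hamiltonian if it is non-abelian and all its subgroups are normal. -/
def IsHamiltonian (H : Type*) [Group H] : Prop :=
  (¬ ∀ a b : H, a * b = b * a) ∧ ∀ K : Subgroup H, K.Normal

section Aux

variable {H : Type*} [Group H]

def paQ (u : MonoidAlgebra ℚ H) (g : H) : ℚ :=
  Finsupp.sum u.coeff fun x a => if IsConj g x then a else 0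

lemma paQ_add (a b : MonoidAlgebra ℚ H) (g : H) :
    paQ (a + b) g = paQ a g + paQ b g :=
  show (a.coeff + b.coeff).sum (fun x a => if IsConj g x then a else 0) =
    a.coeff.sum (fun x a => if IsConj g x then a else 0) +
      b.coeff.sum (fun x a => if IsConj g x then a else 0) from
  Finsupp.sum_add_index' (fun _ => by simp) (fun _ _ _ => by split <;> simp)

def paQHom (g : H) : MonoidAlgebra ℚ H →+ ℚ where
  toFun u := paQ u g
  map_zero' := by simp [paQ]
  map_add' a b := paQ_add a b g

lemma paQ_single (s : H) (a : ℚ) (g : H) :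
    paQ (MonoidAlgebra.single s a) g = if IsConj g s then a else 0 :=
  show (Finsupp.single s a).sum (fun x a => if IsConj g x then a else 0) = _ from
  Finsupp.sum_single_index (by simp)

lemma paQ_mul (a b : MonoidAlgebra ℚ H) (g : H) :
    paQ (a * b) g = ∑ s ∈ a.coeff.support, ∑ t ∈ b.coeff.support,
      if IsConj g (s * t) then a.coeff s * b.coeff t else 0 := by
  show paQHom g (a * b) = _
  rw [MonoidAlgebra.mul_def, map_finsuppSum]
  refine Finset.sum_congr rfl fun s _ => ?_
  dsimp only
  rw [map_finsuppSum]
  exact Finset.sum_congr rfl fun t _ => paQ_single _ _ _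

lemma paQ_mul_comm (a b : MonoidAlgebra ℚ H) (g : H) :
    paQ (a * b) g = paQ (b * a) g := by
  rw [paQ_mul, paQ_mul, Finset.sum_comm]
  refine Finset.sum_congr rfl fun t _ => Finset.sum_congr rfl fun s _ => ?_
  have hc : IsConj g (s * t) ↔ IsConj g (t * s) :=
    ⟨fun h => h.trans (by rw [isConj_iff]; exact ⟨t, by group⟩),
     fun h => h.trans (by rw [isConj_iff]; exact ⟨s, by group⟩)⟩
  simp only [hc, mul_comm (b.coeff t) (a.coeff s)]

lemma paQ_conj (w : MonoidAlgebra ℚ H) (v : (MonoidAlgebra ℚ H)ˣ) (g : H) :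
    paQ ((↑v⁻¹ : MonoidAlgebra ℚ H) * w * (↑v : MonoidAlgebra ℚ H)) g = paQ w g := by
  rw [mul_assoc, paQ_mul_comm, mul_assoc, Units.mul_inv, mul_one]

lemma pa_add (a b : MonoidAlgebra ℤ H) (g : H) :
    pa (a + b) g = pa a g + pa b g :=
  show (a.coeff + b.coeff).sum (fun x a => if IsConj g x then a else 0) =
    a.coeff.sum (fun x a => if IsConj g x then a else 0) +
      b.coeff.sum (fun x a => if IsConj g x then a else 0) from
  Finsupp.sum_add_index' (fun _ => by simp) (fun _ _ _ => by split <;> simp)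

lemma pa_single (s : H) (a : ℤ) (g : H) :
    pa (MonoidAlgebra.single s a : MonoidAlgebra ℤ H) g = if IsConj g s then a else 0 :=
  show (Finsupp.single s a).sum (fun x a => if IsConj g x then a else 0) = _ from
  Finsupp.sum_single_index (by simp)

lemma toQ_single (s : H) (a : ℤ) :
    toQ (MonoidAlgebra.single s a : MonoidAlgebra ℤ H) = MonoidAlgebra.single s (a : ℚ) := by
  show MonoidAlgebra.liftNC _ _ (MonoidAlgebra.single s a) = _
  rw [MonoidAlgebra.liftNC_single]
  show MonoidAlgebra.single 1 ((a : ℚ)) * MonoidAlgebra.single s 1 = _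
  rw [MonoidAlgebra.single_mul_single, one_mul, mul_one]

lemma paQ_toQ (w : MonoidAlgebra ℤ H) (g : H) :
    paQ (toQ w) g = (pa w g : ℚ) := by
  induction w using MonoidAlgebra.induction_linear with
  | zero => simp [paQ, pa]
  | add a b ha hb => rw [map_add, paQ_add, pa_add, ha, hb]; push_cast; ring
  | single s a => rw [toQ_single, paQ_single, pa_single]; split <;> simp

lemma aug_mapDomain {K : Type*} [Group K] (f : H → K) (w : MonoidAlgebra ℤ H) :
    aug (MonoidAlgebra.mapDomain f w) = aug w :=
  show (Finsupp.mapDomain f w.coeff).sum (fun _ a => a) = w.coeff.sum fun _ a => a from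
  Finsupp.sum_mapDomain_index (fun _ => rfl) (fun _ _ _ => rfl)

lemma pa_mapDomain {K : Type*} [Group K] (f : H →* K) (w : MonoidAlgebra ℤ H) (x : H)
    (hconj : ∀ g : H, IsConj (f x) (f g) ↔ IsConj x g) :
    pa (MonoidAlgebra.mapDomain f w) (f x) = pa w x := by
  show (Finsupp.mapDomain f w.coeff).sum (fun y a => if IsConj (f x) y then a else 0)
    = w.coeff.sum fun g a => if IsConj x g then a else 0
  rw [Finsupp.sum_mapDomain_index (fun _ => by simp) (fun b m₁ m₂ => by split <;> simp)]
  exact Finsupp.sum_congr fun g _ => by simp only [hconj g]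

lemma pa_nonneg_of_ratconj (w : MonoidAlgebra ℤ H) (h : H) (hr : RatConj w h) (g : H) :
    0 ≤ pa w g := by
  obtain ⟨v, hv⟩ := hr
  have h2 : paQ (MonoidAlgebra.of ℚ H h) g = paQ (toQ w) g := by
    rw [← hv]; exact paQ_conj _ v g
  have h3 : ((pa w g : ℤ) : ℚ) = if IsConj g h then 1 else 0 := by
    rw [← paQ_toQ, ← h2]
    show paQ (MonoidAlgebra.single h (1 : ℚ)) g = _
    rw [paQ_single]
  have h4 : (0 : ℚ) ≤ ((pa w g : ℤ) : ℚ) := by rw [h3]; split <;> norm_num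
  exact_mod_cast h4

end Aux

set_option maxHeartbeats 1000000 in
/-- If `(x,G)` contains a nontrivial normal subgroup of `G`
then `ε_x(u) ≥ 0`. Here `(x,g) = x⁻¹g⁻¹xg`. -/
theorem stmt6 {G : Type*} [Group G] [Fintype G]
    (A : Subgroup G) [A.Normal] (hA : IsCyclic ↥A)
    (hnil : Group.IsNilpotent (G ⧸ A))
    (hquot : ZCProperQuotients G)
    (u : (MonoidAlgebra ℤ G)ˣ) (hu : IsOfFinOrder u)
    (haug : aug (u : MonoidAlgebra ℤ G) = 1)
    (x : G)
    (hx : ∃ M : Subgroup G, M.Normal ∧ M ≠ ⊥ ∧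
      (M : Set G) ⊆ {c : G | ∃ g : G, c = x⁻¹ * g⁻¹ * x * g}) :
    0 ≤ pa (u : MonoidAlgebra ℤ G) x := by
  obtain ⟨M, hMnorm, hMne, hMsub⟩ := hx
  haveI := hMnorm
  -- key group-theoretic fact
  have hconj : ∀ g : G,
      IsConj ((QuotientGroup.mk' M) x) ((QuotientGroup.mk' M) g) ↔ IsConj x g := by
    intro g
    constructor
    · intro hc
      rw [isConj_iff] at hc
      obtain ⟨c, hc⟩ := hc
      obtain ⟨k, rfl⟩ := QuotientGroup.mk'_surjective M c
      have hmk : (QuotientGroup.mk' M) (k * x * k⁻¹) = (QuotientGroup.mk' M) g := by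
        rw [map_mul, map_mul, map_inv]; exact hc
      have hgm : (k * x * k⁻¹)⁻¹ * g ∈ M := by
        rw [← QuotientGroup.eq]
        exact hmk
      have hm2 : k⁻¹ * ((k * x * k⁻¹)⁻¹ * g) * k⁻¹⁻¹ ∈ M :=
        hMnorm.conj_mem _ hgm k⁻¹
      obtain ⟨h, hh⟩ := hMsub hm2
      rw [isConj_iff]
      refine ⟨k * h⁻¹, ?_⟩
      have h2 : g = (k * x * k⁻¹) * (k * (k⁻¹ * ((k * x * k⁻¹)⁻¹ * g) * k⁻¹⁻¹) * k⁻¹) := by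
        group
      rw [h2, hh]
      group
    · intro hc
      rw [isConj_iff] at hc ⊢
      obtain ⟨c, hc⟩ := hc
      exact ⟨(QuotientGroup.mk' M) c, by rw [← hc]; simp [map_mul]⟩
  -- pass to the quotient
  have hcoe : ((Units.map (MonoidAlgebra.mapDomainRingHom ℤ
        (QuotientGroup.mk' M)).toMonoidHom u : (MonoidAlgebra ℤ (G ⧸ M))ˣ) :
        MonoidAlgebra ℤ (G ⧸ M))
      = MonoidAlgebra.mapDomain (QuotientGroup.mk' M) (↑u : MonoidAlgebra ℤ G) := by
    rw [Units.coe_map]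
    exact MonoidAlgebra.mapDomainRingHom_apply ℤ (QuotientGroup.mk' M) (↑u : MonoidAlgebra ℤ G)
  have hfin : IsOfFinOrder (Units.map (MonoidAlgebra.mapDomainRingHom ℤ
      (QuotientGroup.mk' M)).toMonoidHom u) :=
    (Units.map _).isOfFinOrder hu
  have haug' : aug ((Units.map (MonoidAlgebra.mapDomainRingHom ℤ
      (QuotientGroup.mk' M)).toMonoidHom u : (MonoidAlgebra ℤ (G ⧸ M))ˣ) :
      MonoidAlgebra ℤ (G ⧸ M)) = 1 := by
    rw [hcoe, aug_mapDomain]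
    exact haug
  obtain ⟨h, hr⟩ := hquot M hMne _ hfin haug'
  have hnn := pa_nonneg_of_ratconj _ h hr ((QuotientGroup.mk' M) x)
  rw [hcoe, pa_mapDomain _ _ _ hconj] at hnn
  exact hnn

end ZCPaper
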